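/- arXiv:1909.12353 — 4 statements merged into one kernel-verified Lean document; each statement's English description precedes it below -/
import Mathlib

section
/- Let H be a hypergraph and w₁ a configuration on H. Then w₁ is a stabilizing configuration for the annihilating random walk on H if and only if the GF(2) system H(w₁, 0), with variables z_e per hyperedge e and equations Σ_{e∋v} z_e = w₁(v) for each vertex v, has a solution. -/
/-!
A move along a hyperedge `e` adds the indicator of `e` to the configuration, so it preserves
solvability of the system in both directions (moves along `e` are involutions). Conversely,
if `z` solves the system for `w` and `v` is live, some hyperedge `e ∋ v` has `z e = 1`; firing
`v` along `e` gives a configuration solved by `z` with `e` removed from its support, so the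
all-zero configuration is reached after `|supp z|` moves.
-/

def arwMove {V : Type*} [DecidableEq V] (E : Finset (Finset V))
    (w w' : V → ZMod 2) : Prop :=
  ∃ e ∈ E, (∃ v ∈ e, w v = 1) ∧ w' = fun u => if u ∈ e then w u + 1 else w u

theorem ZMod.eq_one_of_ne_zero {a : ZMod 2} (ha : a ≠ 0) : a = 1 := by
  revert a; decide

namespace ARW

variable {V : Type*} [DecidableEq V]

def flipOn (e : Finset V) (w : V → ZMod 2) : V → ZMod 2 :=
  fun u => if u ∈ e then w u + 1 else w u

theorem flipOn_flipOn (e : Finset V) (w : V → ZMod 2) : flipOn e (flipOn e w) = w := by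
  funext u
  by_cases hu : u ∈ e <;> simp [flipOn, hu, add_assoc, CharTwo.add_self_eq_zero]

theorem arwMove_iff {E : Finset (Finset V)} {w w' : V → ZMod 2} :
    arwMove E w w' ↔ ∃ e ∈ E, (∃ v ∈ e, w v = 1) ∧ w' = flipOn e w :=
  Iff.rfl

variable (E : Finset (Finset V))

def incidenceSum (z : Finset V → ZMod 2) (v : V) : ZMod 2 :=
  ∑ e ∈ E.filter (fun e => v ∈ e), z e

def Solvable (w : V → ZMod 2) : Prop :=
  ∃ z, incidenceSum E z = w

variable {E}

theorem incidenceSum_add_single {e : Finset V} (he : e ∈ E) (z : Finset V → ZMod 2) :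
    incidenceSum E (z + Pi.single e 1) = flipOn e (incidenceSum E z) := by
  funext u
  by_cases hu : u ∈ e <;>
    simp [incidenceSum, flipOn, Finset.sum_add_distrib, Finset.sum_pi_single', he, hu]

theorem Solvable.flipOn {e : Finset V} (he : e ∈ E) {w : V → ZMod 2} (h : Solvable E w) :
    Solvable E (flipOn e w) := by
  obtain ⟨z, rfl⟩ := h
  exact ⟨z + Pi.single e 1, incidenceSum_add_single he z⟩

theorem solvable_flipOn_iff {e : Finset V} (he : e ∈ E) {w : V → ZMod 2} :
    Solvable E (flipOn e w) ↔ Solvable E w :=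
  ⟨fun h => flipOn_flipOn e w ▸ h.flipOn he, Solvable.flipOn he⟩

theorem solvable_iff_of_reflTransGen {w w' : V → ZMod 2}
    (h : Relation.ReflTransGen (arwMove E) w w') : Solvable E w ↔ Solvable E w' := by
  induction h with
  | refl => rfl
  | tail _ hmove ih =>
    obtain ⟨e, he, -, rfl⟩ := arwMove_iff.1 hmove
    exact ih.trans (solvable_flipOn_iff he).symm

theorem filter_add_single_ne_zero {e : Finset V} {z : Finset V → ZMod 2} (hz : z e ≠ 0) :
    E.filter (fun f => (z + Pi.single e 1 : Finset V → ZMod 2) f ≠ 0) =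
      (E.filter fun f => z f ≠ 0).erase e := by
  ext f
  rcases eq_or_ne f e with rfl | hfe
  · simp [ZMod.eq_one_of_ne_zero hz, CharTwo.add_self_eq_zero]
  · simp [hfe]

theorem reflTransGen_zero_of_incidenceSum_eq (z : Finset V → ZMod 2) :
    Relation.ReflTransGen (arwMove E) (incidenceSum E z) 0 := by
  by_cases hw : incidenceSum E z = 0
  · rw [hw]
  obtain ⟨v, hv⟩ := Function.ne_iff.1 hw
  obtain ⟨e, hev, hze⟩ := Finset.exists_ne_zero_of_sum_ne_zero hv
  obtain ⟨he, hve⟩ := Finset.mem_filter.1 hev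
  have hmove : arwMove E (incidenceSum E z) (incidenceSum E (z + Pi.single e 1)) :=
    ⟨e, he, ⟨v, hve, ZMod.eq_one_of_ne_zero hv⟩, incidenceSum_add_single he z⟩
  exact .head hmove (reflTransGen_zero_of_incidenceSum_eq (z + Pi.single e 1))
termination_by (E.filter (fun f => z f ≠ 0)).card
decreasing_by
  rw [filter_add_single_ne_zero hze]
  exact Finset.card_erase_lt_of_mem (Finset.mem_filter.2 ⟨he, hze⟩)

end ARW

theorem stmt_11_general {V : Type*} [DecidableEq V]
    (E : Finset (Finset V)) (w₁ : V → ZMod 2) :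
    (∀ w' : V → ZMod 2, Relation.ReflTransGen (arwMove E) w₁ w' →
        Relation.ReflTransGen (arwMove E) w' (fun _ => 0)) ↔
      ∃ z : Finset V → ZMod 2,
        ∀ v : V, ∑ e ∈ E.filter (fun e => v ∈ e), z e = w₁ v := by
  change _ ↔ ∃ z, ∀ v, ARW.incidenceSum E z v = w₁ v
  simp only [← funext_iff]
  constructor
  · intro h
    exact (ARW.solvable_iff_of_reflTransGen (h w₁ .refl)).2
      ⟨0, by funext v; simp [ARW.incidenceSum]⟩
  · rintro hsol w' hw'
    obtain ⟨z, rfl⟩ := (ARW.solvable_iff_of_reflTransGen hw').1 hsol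
    exact ARW.reflTransGen_zero_of_incidenceSum_eq z

/-- A configuration `w₁` is stabilizing for the annihilating random walk on `H` iff the
all-zero configuration is reachable from `w₁` and from every configuration reachable
from `w₁`. This holds iff the GF(2) system `H(w₁, 0)`, with a variable `z_e` per
hyperedge and equations `∑_{e ∋ v} z_e = w₁(v)`, has a solution. -/
theorem stmt_11 {V : Type*} [Fintype V] [DecidableEq V]
    (E : Finset (Finset V)) (w₁ : V → ZMod 2) :
    (∀ w' : V → ZMod 2, Relation.ReflTransGen (arwMove E) w₁ w' →
        Relation.ReflTransGen (arwMove E) w' (fun _ => 0)) ↔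
      ∃ z : Finset V → ZMod 2,
        ∀ v : V, ∑ e ∈ E.filter (fun e => v ∈ e), z e = w₁ v :=
  stmt_11_general E w₁
end

section
/- There is a connected hypergraph H with no edges of size 2 and configurations w₁, w₂ : V(H) → GF(2) such that the system H(w₁,w₂) has a GF(2) solution but w₂ is not reachable from w₁. Concretely: H has three 3-element hyperedges e₁,e₂,e₃ sharing a single common vertex c; w₁ is 1 exactly on the two private vertices of e₂; w₂ is 1 on all vertices except c. -/
/-!
The three hyperedges form a sunflower with core `c = 0`. From the indicator of `{c}` a move
flips some petal `e`, giving the indicator of `e \ {c}`; from there the only hyperedge meeting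
the support is `e` itself, and flipping it returns to the indicator of `{c}`. So every
configuration reachable from `w₁` is one of these four, while `w₂` has six ones. The system
itself is solved by `z = 1` on `e₁, e₃`, since `w₂ - w₁ = 1_{e₁} + 1_{e₃}` over GF(2).
-/

/-- One hyperedge-flip move: choose a hyperedge containing a vertex labeled 1 and flip
all labels on that hyperedge. -/
def flipMove {V : Type*} [DecidableEq V] (E : Finset (Finset V))
    (w w' : V → ZMod 2) : Prop :=
  ∃ e ∈ E, (∃ v ∈ e, w v = 1) ∧ w' = fun u => if u ∈ e then w u + 1 else w u

variable {V : Type*} [DecidableEq V]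

def indicatorLabel (s : Finset V) : V → ZMod 2 := fun u => if u ∈ s then 1 else 0

def SunflowerOrbit (E : Finset (Finset V)) (c : V) (w : V → ZMod 2) : Prop :=
  w = indicatorLabel {c} ∨ ∃ e ∈ E, w = indicatorLabel (e.erase c)

section Sunflower

variable {E : Finset (Finset V)} {c : V}

theorem flipMove_indicatorLabel_core {w : V → ZMod 2} (h : flipMove E (indicatorLabel {c}) w) :
    ∃ e ∈ E, w = indicatorLabel (e.erase c) := by
  obtain ⟨e, he, ⟨v, hv, hv1⟩, rfl⟩ := h
  have hve : v = c := by
    by_contra hvc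
    simp [indicatorLabel, hvc] at hv1
  subst hve
  refine ⟨e, he, funext fun u => ?_⟩
  by_cases hu : u = v <;> by_cases hue : u ∈ e <;> simp_all [indicatorLabel]; decide

theorem flipMove_indicatorLabel_petal (hcore : ∀ e ∈ E, c ∈ e)
    (hpetals : ∀ e ∈ E, ∀ e' ∈ E, e ≠ e' → e ∩ e' ⊆ {c}) {e' : Finset V} (he' : e' ∈ E)
    {w : V → ZMod 2} (h : flipMove E (indicatorLabel (e'.erase c)) w) :
    w = indicatorLabel {c} := by
  obtain ⟨e, he, ⟨v, hv, hv1⟩, rfl⟩ := h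
  have hv' : v ∈ e'.erase c := by
    by_contra hv'
    simp [indicatorLabel, hv'] at hv1
  have hee' : e = e' := by
    by_contra hne
    have := hpetals e he e' he' hne (Finset.mem_inter.2 ⟨hv, Finset.mem_of_mem_erase hv'⟩)
    exact Finset.ne_of_mem_erase hv' (Finset.mem_singleton.1 this)
  subst hee'
  have hc := hcore e he
  funext u
  by_cases hu : u = c
  · subst hu; simp [indicatorLabel, hc]
  · by_cases hue : u ∈ e <;> simp [indicatorLabel, hu, hue]; decide

theorem SunflowerOrbit.of_reflTransGen (hcore : ∀ e ∈ E, c ∈ e)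
    (hpetals : ∀ e ∈ E, ∀ e' ∈ E, e ≠ e' → e ∩ e' ⊆ {c}) {w₁ w : V → ZMod 2}
    (h₁ : SunflowerOrbit E c w₁) (h : Relation.ReflTransGen (flipMove E) w₁ w) :
    SunflowerOrbit E c w := by
  induction h with
  | refl => exact h₁
  | tail _ hmove ih =>
    rcases ih with rfl | ⟨e', he', rfl⟩
    · exact Or.inr (flipMove_indicatorLabel_core hmove)
    · exact Or.inl (flipMove_indicatorLabel_petal hcore hpetals he' hmove)

end Sunflower

set_option maxRecDepth 4000 in
/-- A connected hypergraph with no graph edges for which the system `H(w₁,w₂)` has a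
GF(2) solution, yet `w₂` is not reachable from `w₁`: three 3-element hyperedges
`e₁ = {0,1,2}`, `e₂ = {0,3,4}`, `e₃ = {0,5,6}` sharing the common vertex `0`; `w₁` is 1
exactly on the private vertices `3, 4` of `e₂`, and `w₂` is 1 everywhere except at `0`. -/
theorem stmt_12 :
    (∀ e ∈ ({({0, 1, 2} : Finset (Fin 7)), {0, 3, 4}, {0, 5, 6}} : Finset (Finset (Fin 7))),
      e.card = 3) ∧
    (∃ z : Finset (Fin 7) → ZMod 2,
      ∀ v : Fin 7,
        ∑ e ∈ (({({0, 1, 2} : Finset (Fin 7)), {0, 3, 4}, {0, 5, 6}} :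
            Finset (Finset (Fin 7))).filter (fun e => v ∈ e)), z e =
          (fun v : Fin 7 => if v = 0 then (0 : ZMod 2) else 1) v -
          (fun v : Fin 7 => if v = 3 ∨ v = 4 then (1 : ZMod 2) else 0) v) ∧
    ¬ Relation.ReflTransGen
        (flipMove ({({0, 1, 2} : Finset (Fin 7)), {0, 3, 4}, {0, 5, 6}} :
          Finset (Finset (Fin 7))))
        (fun v : Fin 7 => if v = 3 ∨ v = 4 then (1 : ZMod 2) else 0)
        (fun v : Fin 7 => if v = 0 then (0 : ZMod 2) else 1) := by
  refine ⟨by decide, ⟨indicatorLabel {{0, 1, 2}, {0, 5, 6}}, by decide⟩, fun h => ?_⟩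
  have hw₁ : SunflowerOrbit (V := Fin 7) {{0, 1, 2}, {0, 3, 4}, {0, 5, 6}} 0
      (fun v => if v = 3 ∨ v = 4 then 1 else 0) :=
    Or.inr ⟨{0, 3, 4}, by decide, by unfold indicatorLabel; decide⟩
  have hw₂ := SunflowerOrbit.of_reflTransGen (by decide) (by decide) hw₁ h
  revert hw₂
  unfold SunflowerOrbit indicatorLabel
  decide
end

section
/- In the complete graph K₄, let w₁ be the configuration with value 1 at a single vertex v and w₂ the configuration with value 1 at every vertex except v. Then the system H(w₁,w₂) has a GF(2) solution (z_e = 1 for every edge), yet w₂ is not reachable from w₁ under the annihilating-random-walk moves, because on a graph each move does not increase the number of vertices labeled 1, while w₁ has one 1 and w₂ has three. -/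
open Finset

section Ones

variable {V : Type*} [Fintype V]

def ones (w : V → ZMod 2) : Finset V :=
  {v | w v = 1}

@[simp]
theorem mem_ones {w : V → ZMod 2} {v : V} : v ∈ ones w ↔ w v = 1 := by
  simp [ones]

theorem card_ones_le_of_flipMove [DecidableEq V] {E : Finset (Finset V)} (hE : ∀ e ∈ E, #e = 2)
    {w w' : V → ZMod 2} (h : flipMove E w w') : #(ones w') ≤ #(ones w) := by
  obtain ⟨e, he, ⟨a, hae, ha⟩, rfl⟩ := h
  obtain ⟨b, heb⟩ : ∃ b, e.erase a = {b} :=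
    card_eq_one.mp (by rw [card_erase_of_mem hae, hE e he])
  have hsub : ones (fun u => if u ∈ e then w u + 1 else w u) ⊆ insert b ((ones w).erase a) := by
    intro v hv
    rw [mem_ones] at hv
    by_cases hve : v ∈ e
    · have hva : v ≠ a := by
        rintro rfl
        rw [if_pos hve, ha] at hv
        exact absurd hv (by decide)
      have hvb : v ∈ e.erase a := mem_erase.mpr ⟨hva, hve⟩
      rw [heb, mem_singleton] at hvb
      exact mem_insert.mpr (Or.inl hvb)
    · rw [if_neg hve] at hv
      have hva : v ≠ a := fun hva => hve (hva ▸ hae)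
      exact mem_insert_of_mem (mem_erase.mpr ⟨hva, mem_ones.mpr hv⟩)
  calc #(ones _) ≤ #(insert b ((ones w).erase a)) := card_le_card hsub
    _ ≤ #((ones w).erase a) + 1 := card_insert_le _ _
    _ = #(ones w) := card_erase_add_one (mem_ones.mpr ha)

theorem card_ones_le_of_reflTransGen_flipMove [DecidableEq V]
    {E : Finset (Finset V)} (hE : ∀ e ∈ E, #e = 2)
    {w w' : V → ZMod 2} (h : Relation.ReflTransGen (flipMove E) w w') :
    #(ones w') ≤ #(ones w) := by
  induction h with
  | refl => exact le_rfl
  | tail _ hmove ih => exact (card_ones_le_of_flipMove hE hmove).trans ih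

end Ones

/-- In the complete graph `K₄` (edges: all 2-element subsets of `Fin 4`), let `w₁` be 1
only at the vertex `0` and `w₂` be 1 at every vertex except `0`. Then `z_e = 1` for every
edge solves the system `H(w₁,w₂)`, yet `w₂` is not reachable from `w₁` under the
annihilating-random-walk moves. -/
theorem stmt_13 :
    (∀ v : Fin 4,
      ∑ _e ∈ (((Finset.univ : Finset (Finset (Fin 4))).filter
          (fun e => e.card = 2)).filter (fun e => v ∈ e)), (1 : ZMod 2) =
        (fun v : Fin 4 => if v = 0 then (0 : ZMod 2) else 1) v -
        (fun v : Fin 4 => if v = 0 then (1 : ZMod 2) else 0) v) ∧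
    ¬ Relation.ReflTransGen
        (flipMove ((Finset.univ : Finset (Finset (Fin 4))).filter (fun e => e.card = 2)))
        (fun v : Fin 4 => if v = 0 then (1 : ZMod 2) else 0)
        (fun v : Fin 4 => if v = 0 then (0 : ZMod 2) else 1) := by
  refine ⟨by decide, fun h => ?_⟩
  have hle := card_ones_le_of_reflTransGen_flipMove (fun e he => (mem_filter.mp he).2) h
  have hw₁ : #(ones (fun v : Fin 4 => if v = 0 then (1 : ZMod 2) else 0)) = 1 := by decide
  have hw₂ : #(ones (fun v : Fin 4 => if v = 0 then (0 : ZMod 2) else 1)) = 3 := by decide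
  omega
end

section
/- Let H be an odd-connected hypergraph in which some hyperedge has odd size. Then in the two-party voter model on H, the all-zero state 0 is reachable from every initial state A. -/
/-! Count the ones of a state. If the state is not all-zero, its support `B` is nonempty, so
either `B = V` and the odd hyperedge meets it in an odd number of vertices, or odd-connectedness
gives a hyperedge `e` with `|B ∩ e|` odd. Then the labels of `e` sum to `1`, so for a `1`-labelled
vertex `i ∈ B ∩ e` the other labels of `e` sum to `0`, and updating `i` along `e` kills one `1`. -/

/-- One move of the two-party voter model on a hypergraph: choose a vertex `i` and a
hyperedge `e ∋ i` and set `A_i` to the XOR of the labels of the other vertices of `e`. -/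
def voterMove {V : Type*} [DecidableEq V] (E : Finset (Finset V))
    (A A' : V → ZMod 2) : Prop :=
  ∃ i : V, ∃ e ∈ E, i ∈ e ∧ A' = Function.update A i (∑ j ∈ e.erase i, A j)

open Finset

theorem Relation.reflTransGen_of_exists_measure_lt {α : Type*} {r : α → α → Prop} {b : α}
    (μ : α → ℕ) (h_zero : ∀ a, μ a = 0 → a = b)
    (h_step : ∀ a, μ a ≠ 0 → ∃ a', r a a' ∧ μ a' < μ a) (a : α) :
    ReflTransGen r a b := by
  induction a using (measure μ).wf.induction with
  | _ a ih =>
    by_cases ha : μ a = 0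
    · rw [h_zero a ha]
    · obtain ⟨a', hr, hlt⟩ := h_step a ha
      exact .head hr (ih a' hlt)

theorem ZMod.eq_one_of_ne_zero_two {x : ZMod 2} : x ≠ 0 → x = 1 := by
  revert x; decide

theorem ZMod.sum_two_eq_card_filter_ne_zero {ι : Type*} (s : Finset ι) (f : ι → ZMod 2) :
    ∑ j ∈ s, f j = #{j ∈ s | f j ≠ 0} := by
  rw [natCast_card_filter]
  refine sum_congr rfl fun j _ => ?_
  generalize f j = x
  revert x; decide

section VoterModel

variable {V : Type*} [DecidableEq V] {E : Finset (Finset V)}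

theorem exists_mem_odd_card_inter [Fintype V]
    (hoddconn : ¬ ∃ B : Finset V, B ≠ ∅ ∧ B ≠ univ ∧ ∀ e ∈ E, Even (#(B ∩ e)))
    (hodd : ∃ e ∈ E, Odd (#e)) {B : Finset V} (hB : B.Nonempty) :
    ∃ e ∈ E, Odd (#(B ∩ e)) := by
  by_cases hBu : B = univ
  · simpa only [hBu, univ_inter] using hodd
  · by_contra! h_even
    exact hoddconn ⟨B, hB.ne_empty, hBu, fun e he => by simpa using h_even e he⟩

theorem voterMove_update_zero {A : V → ZMod 2} {e : Finset V} {i : V} (he : e ∈ E)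
    (hi : i ∈ e) (hAi : A i ≠ 0) (h_odd : Odd (#{j ∈ e | A j ≠ 0})) :
    voterMove E A (Function.update A i 0) := by
  have h_sum : A i + ∑ j ∈ e.erase i, A j = 1 := by
    rw [add_sum_erase e A hi, ZMod.sum_two_eq_card_filter_ne_zero, h_odd.natCast_zmod_two]
  rw [ZMod.eq_one_of_ne_zero_two hAi, add_eq_left] at h_sum
  exact ⟨i, e, he, hi, by rw [h_sum]⟩

theorem filter_update_zero_ne_zero [Fintype V] (A : V → ZMod 2) (i : V) :
    ({v | Function.update A i 0 v ≠ 0} : Finset V) = ({v | A v ≠ 0} : Finset V).erase i := by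
  ext v
  by_cases hv : v = i <;> simp [hv]

theorem exists_voterMove_card_lt [Fintype V]
    (hoddconn : ¬ ∃ B : Finset V, B ≠ ∅ ∧ B ≠ univ ∧ ∀ e ∈ E, Even (#(B ∩ e)))
    (hodd : ∃ e ∈ E, Odd (#e)) {A : V → ZMod 2} (hA : #{v | A v ≠ 0} ≠ 0) :
    ∃ A', voterMove E A A' ∧ #{v | A' v ≠ 0} < #{v | A v ≠ 0} := by
  obtain ⟨e, he, h_odd⟩ := exists_mem_odd_card_inter hoddconn hodd (card_ne_zero.mp hA)
  obtain ⟨i, hi⟩ := card_pos.mp h_odd.pos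
  rw [mem_inter] at hi
  have hAi : A i ≠ 0 := (mem_filter.mp hi.1).2
  have h_inter : ({v | A v ≠ 0} : Finset V) ∩ e = {j ∈ e | A j ≠ 0} := by
    ext j; simp [and_comm]
  refine ⟨_, voterMove_update_zero he hi.2 hAi (h_inter ▸ h_odd), ?_⟩
  rw [filter_update_zero_ne_zero]
  exact card_erase_lt_of_mem hi.1

end VoterModel

/-- If `H` is an odd-connected hypergraph (no set `B` with `∅ ≠ B ≠ V` meeting every
hyperedge in an even number of vertices) having some hyperedge of odd size, then in the
two-party voter model on `H` the all-zero state is reachable from every initial state. -/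
theorem stmt_15 {V : Type*} [Fintype V] [DecidableEq V]
    (E : Finset (Finset V))
    (hoddconn : ¬ ∃ B : Finset V, B ≠ ∅ ∧ B ≠ Finset.univ ∧
      ∀ e ∈ E, Even ((B ∩ e).card))
    (hodd : ∃ e ∈ E, Odd e.card) :
    ∀ A : V → ZMod 2,
      Relation.ReflTransGen (voterMove E) A (fun _ => 0) :=
  Relation.reflTransGen_of_exists_measure_lt (fun A => #{v | A v ≠ 0})
    (fun _ hA => funext <| by simpa using hA)
    (fun _ hA => exists_voterMove_card_lt hoddconn hodd hA)
end
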